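/- Let L > 0, 0 < α < 1 and p > 2. For every continuous function φ : [0,L] → ℂ with finite α-Hölder seminorm, one has ‖φ‖_p^p ≤ (2/√L)^{p−2} ‖φ‖_2^p + 4^{p−2} ‖φ‖_2^{2(αp+1)/(2α+1)} ‖φ‖_{Hol,α}^{(p−2)/(2α+1)}, where ‖φ‖_p^p = ∫_0^L |φ(x)|^p dx. -/

import Mathlib

/-! If `‖φ x‖` is large, the Hölder bound keeps `‖φ‖ ≥ ‖φ x‖ - C δ^α` on a whole window of
length `δ` around `x`, whose `L²` mass then gives `‖φ x‖ ≤ ‖φ‖₂ / √δ + C δ^α`. Balancing the two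
terms in `δ` (or taking `δ = L` when the balancing scale exceeds `L`) bounds `‖φ‖_∞`, and
`‖φ‖_p^p ≤ ‖φ‖_∞^(p-2) ‖φ‖₂²` concludes. -/

open Real Set MeasureTheory Filter Topology

lemma exists_subinterval_length_mem {x L δ : ℝ} (hx : x ∈ Icc 0 L) (hδ : 0 ≤ δ) (hδL : δ ≤ L) :
    ∃ a, 0 ≤ a ∧ a + δ ≤ L ∧ x ∈ Icc a (a + δ) := by
  refine ⟨min x (L - δ), le_min hx.1 (by linarith), by linarith [min_le_right x (L - δ)],
    min_le_left _ _, ?_⟩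
  rcases le_total x (L - δ) with h | h
  · rw [min_eq_left h]; linarith
  · rw [min_eq_right h]; linarith [hx.2]

lemma mul_sq_le_integral_sq {g : ℝ → ℝ} {a b c : ℝ} (hab : a ≤ b) (hg : ContinuousOn g (Icc a b))
    (hc : 0 ≤ c) (hcg : ∀ t ∈ Icc a b, c ≤ g t) :
    (b - a) * c ^ 2 ≤ ∫ t in a..b, g t ^ 2 :=
  calc (b - a) * c ^ 2 = ∫ _ in a..b, c ^ 2 := by simp
    _ ≤ ∫ t in a..b, g t ^ 2 :=
      intervalIntegral.integral_mono_on hab intervalIntegrable_const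
        ((hg.pow 2).intervalIntegrable_of_Icc hab) fun t ht => pow_le_pow_left₀ hc (hcg t ht) 2

lemma Real.rpow_le_rpow_sub_two_mul_sq {x M p : ℝ} (hx : 0 ≤ x) (hxM : x ≤ M) (hp : 2 ≤ p) :
    x ^ p ≤ M ^ (p - 2) * x ^ 2 := by
  calc x ^ p = x ^ (p - 2) * x ^ 2 := by
        rw [← rpow_two, ← rpow_add' hx (by linarith), sub_add_cancel]
    _ ≤ M ^ (p - 2) * x ^ 2 := by gcongr

lemma integral_rpow_le_rpow_mul_integral_sq {g : ℝ → ℝ} {a b M p : ℝ} (hab : a ≤ b)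
    (hg : ContinuousOn g (Icc a b)) (hg0 : ∀ t, 0 ≤ g t) (hgM : ∀ t ∈ Icc a b, g t ≤ M)
    (hp : 2 ≤ p) :
    ∫ t in a..b, g t ^ p ≤ M ^ (p - 2) * ∫ t in a..b, g t ^ 2 := by
  rw [← intervalIntegral.integral_const_mul]
  refine intervalIntegral.integral_mono_on hab
    ((hg.rpow_const fun _ _ => Or.inr (by linarith)).intervalIntegrable_of_Icc hab)
    (((hg.pow 2).intervalIntegrable_of_Icc hab).const_mul _) fun t ht => ?_
  exact Real.rpow_le_rpow_sub_two_mul_sq (hg0 t) (hgM t ht) hp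

lemma Real.add_rpow_le_two_rpow_mul_add_rpow {a b q : ℝ} (ha : 0 ≤ a) (hb : 0 ≤ b) (hq : 0 ≤ q) :
    (a + b) ^ q ≤ 2 ^ q * (a ^ q + b ^ q) := by
  have hmax : max a b ^ q ≤ a ^ q + b ^ q := by
    rcases le_total a b with h | h
    · rw [max_eq_right h]; linarith [rpow_nonneg ha q]
    · rw [max_eq_left h]; linarith [rpow_nonneg hb q]
  calc (a + b) ^ q ≤ (2 * max a b) ^ q := by
        gcongr; linarith [le_max_left a b, le_max_right a b]
    _ = 2 ^ q * max a b ^ q := mul_rpow zero_le_two (le_max_of_le_left ha)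
    _ ≤ 2 ^ q * (a ^ q + b ^ q) := by gcongr

section Holder

variable {E : Type*} [NormedAddCommGroup E] {φ : ℝ → E} {L α C : ℝ}

lemma norm_le_sqrt_integral_div_sqrt_add_of_holder (hφ : ContinuousOn φ (Icc 0 L))
    (hα : 0 ≤ α) (hC : 0 ≤ C)
    (hHol : ∀ x ∈ Icc 0 L, ∀ y ∈ Icc 0 L, ‖φ y - φ x‖ ≤ C * |y - x| ^ α)
    {x δ : ℝ} (hx : x ∈ Icc 0 L) (hδ : 0 < δ) (hδL : δ ≤ L) :
    ‖φ x‖ ≤ √(∫ t in (0:ℝ)..L, ‖φ t‖ ^ 2) / √δ + C * δ ^ α := by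
  rcases le_or_gt ‖φ x‖ (C * δ ^ α) with h | h
  · have : 0 ≤ √(∫ t in (0:ℝ)..L, ‖φ t‖ ^ 2) / √δ := by positivity
    linarith
  obtain ⟨a, ha, haL, hxa⟩ := exists_subinterval_length_mem hx hδ.le hδL
  have hsub : Icc a (a + δ) ⊆ Icc 0 L := Icc_subset_Icc ha haL
  have hlow : ∀ y ∈ Icc a (a + δ), ‖φ x‖ - C * δ ^ α ≤ ‖φ y‖ := by
    intro y hy
    have hxy : |x - y| ≤ δ :=
      abs_sub_le_iff.2 ⟨by linarith [hxa.2, hy.1], by linarith [hxa.1, hy.2]⟩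
    have hdiff : ‖φ x - φ y‖ ≤ C * δ ^ α := (hHol y (hsub hy) x hx).trans (by gcongr)
    linarith [norm_sub_norm_le (φ x) (φ y)]
  have hwindow : δ * (‖φ x‖ - C * δ ^ α) ^ 2 ≤ ∫ t in (0:ℝ)..L, ‖φ t‖ ^ 2 :=
    calc δ * (‖φ x‖ - C * δ ^ α) ^ 2 = (a + δ - a) * (‖φ x‖ - C * δ ^ α) ^ 2 := by ring
      _ ≤ ∫ t in a..a + δ, ‖φ t‖ ^ 2 :=
        mul_sq_le_integral_sq (by linarith) (hφ.norm.mono hsub) (by linarith) hlow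
      _ ≤ ∫ t in (0:ℝ)..L, ‖φ t‖ ^ 2 :=
        intervalIntegral.integral_mono_interval ha (by linarith) haL
          (ae_of_all _ fun _ => sq_nonneg _)
          ((hφ.norm.pow 2).intervalIntegrable_of_Icc (by linarith))
  have hsqrt : (‖φ x‖ - C * δ ^ α) * √δ ≤ √(∫ t in (0:ℝ)..L, ‖φ t‖ ^ 2) := by
    rw [le_sqrt (mul_nonneg (by linarith) (sqrt_nonneg _)) (le_trans (by positivity) hwindow),
      mul_pow, sq_sqrt hδ.le]
    linarith
  linarith [(le_div_iff₀ (sqrt_pos.2 hδ)).2 hsqrt]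

end Holder

lemma exists_balanced_scale {S C α : ℝ} (hS : 0 < S) (hC : 0 < C) (hα : 0 ≤ α) :
    ∃ δ > 0, S / √δ = S ^ (2 * α / (2 * α + 1)) * C ^ (1 / (2 * α + 1)) ∧
      C * δ ^ α = S ^ (2 * α / (2 * α + 1)) * C ^ (1 / (2 * α + 1)) := by
  have hβ : 0 < 2 * α + 1 := by linarith
  refine ⟨(S / C) ^ (2 / (2 * α + 1)), by positivity, ?_, ?_⟩
  · rw [sqrt_eq_rpow, ← rpow_mul (by positivity), div_rpow hS.le hC.le]
    have hexp : 2 * α / (2 * α + 1) = 1 - 2 / (2 * α + 1) * (1 / 2) := by field_simp; ring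
    rw [hexp, rpow_sub hS, rpow_one]
    have hexp' : 1 / (2 * α + 1) = 2 / (2 * α + 1) * (1 / 2) := by field_simp
    rw [hexp']
    field_simp
  · rw [← rpow_mul (by positivity), div_rpow hS.le hC.le]
    have hexp : 1 / (2 * α + 1) = 1 - 2 / (2 * α + 1) * α := by field_simp; ring
    have hexp' : 2 * α / (2 * α + 1) = 2 / (2 * α + 1) * α := by ring
    rw [hexp, hexp', rpow_sub hC, rpow_one]
    field_simp

lemma le_add_two_mul_rpow_of_forall_le {M S C L α : ℝ} (hS : 0 ≤ S) (hC : 0 ≤ C) (hL : 0 < L)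
    (hα : 0 < α) (h : ∀ δ, 0 < δ → δ ≤ L → M ≤ S / √δ + C * δ ^ α) :
    M ≤ S / √L + 2 * (S ^ (2 * α / (2 * α + 1)) * C ^ (1 / (2 * α + 1))) := by
  set X := S ^ (2 * α / (2 * α + 1)) * C ^ (1 / (2 * α + 1))
  have hX : 0 ≤ X := by positivity
  rcases hC.eq_or_lt with rfl | hCpos
  · simpa using (h L hL le_rfl).trans (by simpa using hX)
  rcases hS.eq_or_lt with rfl | hSpos
  · have hlim : Tendsto (fun δ => C * δ ^ α) (𝓝[>] 0) (𝓝 0) := by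
      simpa [zero_rpow hα.ne'] using
        ((continuousAt_rpow_const 0 α (Or.inr hα.le)).const_mul C).tendsto.mono_left
          nhdsWithin_le_nhds
    have hM : M ≤ 0 := ge_of_tendsto hlim <|
      eventually_of_mem (Ioc_mem_nhdsGT hL) fun δ hδ => by simpa using h δ hδ.1 hδ.2
    simp only [zero_div, zero_add]
    linarith
  obtain ⟨δ, hδ, hS_eq, hC_eq⟩ := exists_balanced_scale hSpos hCpos hα.le
  rcases le_or_gt δ L with hδL | hLδ
  · have : 0 ≤ S / √L := by positivity
    linarith [h δ hδ hδL]
  · have : C * L ^ α ≤ C * δ ^ α := by gcongr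
    linarith [h L hL le_rfl]

lemma two_rpow_mul_add_rpow_mul_sq_eq {S C L α p : ℝ} (hS : 0 ≤ S) (hC : 0 ≤ C) (hα : 0 ≤ α)
    (hp : 2 ≤ p) :
    2 ^ (p - 2) * ((S / √L) ^ (p - 2)
        + (2 * (S ^ (2 * α / (2 * α + 1)) * C ^ (1 / (2 * α + 1)))) ^ (p - 2)) * S ^ 2
      = (2 / √L) ^ (p - 2) * S ^ p
        + 4 ^ (p - 2) * S ^ (2 * (α * p + 1) / (2 * α + 1)) * C ^ ((p - 2) / (2 * α + 1)) := by
  have hβ : 0 < 2 * α + 1 := by linarith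
  have hS2 : S ^ 2 = S ^ (2 : ℝ) := (rpow_two S).symm
  have hSp : S ^ (p - 2) * S ^ (2 : ℝ) = S ^ p := by
    rw [← rpow_add' hS (by linarith), sub_add_cancel]
  have hSq : S ^ (2 * α / (2 * α + 1) * (p - 2)) * S ^ (2 : ℝ)
      = S ^ (2 * (α * p + 1) / (2 * α + 1)) := by
    rw [← rpow_add' hS (by positivity)]
    congr 1
    field_simp
    ring
  have h4 : (2 : ℝ) ^ (p - 2) * 2 ^ (p - 2) = 4 ^ (p - 2) := by
    rw [← mul_rpow zero_le_two zero_le_two]; norm_num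
  rw [div_rpow hS (sqrt_nonneg L), div_rpow zero_le_two (sqrt_nonneg L),
    mul_rpow zero_le_two (by positivity), mul_rpow (by positivity) (by positivity),
    ← rpow_mul hS, ← rpow_mul hC, hS2, ← hSp, ← hSq, ← h4, div_eq_mul_one_div (p - 2),
    mul_comm (p - 2) (1 / _)]
  ring

theorem Lp_le_L2_holder_interpolation
    (L α p : ℝ) (hL : 0 < L) (hα0 : 0 < α) (hp : 2 < p)
    (φ : ℝ → ℂ) (hφ : ContinuousOn φ (Set.Icc 0 L))
    (C : ℝ) (hC : 0 ≤ C)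
    (hHol : ∀ x ∈ Set.Icc 0 L, ∀ y ∈ Set.Icc 0 L, ‖φ y - φ x‖ ≤ C * |y - x| ^ α) :
    (∫ t in (0:ℝ)..L, ‖φ t‖ ^ p)
      ≤ (2 / Real.sqrt L) ^ (p - 2) * (Real.sqrt (∫ t in (0:ℝ)..L, ‖φ t‖ ^ 2)) ^ p
        + 4 ^ (p - 2)
            * (Real.sqrt (∫ t in (0:ℝ)..L, ‖φ t‖ ^ 2)) ^ (2 * (α * p + 1) / (2 * α + 1))
            * C ^ ((p - 2) / (2 * α + 1)) := by
  set S := √(∫ t in (0:ℝ)..L, ‖φ t‖ ^ 2)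
  set X := S ^ (2 * α / (2 * α + 1)) * C ^ (1 / (2 * α + 1))
  have hS : 0 ≤ S := sqrt_nonneg _
  have hsup : ∀ x ∈ Icc 0 L, ‖φ x‖ ≤ S / √L + 2 * X := fun x hx =>
    le_add_two_mul_rpow_of_forall_le hS hC hL hα0 fun _ hδ hδL =>
      norm_le_sqrt_integral_div_sqrt_add_of_holder hφ hα0.le hC hHol hx hδ hδL
  calc (∫ t in (0:ℝ)..L, ‖φ t‖ ^ p)
      ≤ (S / √L + 2 * X) ^ (p - 2) * S ^ 2 := by
        rw [sq_sqrt (intervalIntegral.integral_nonneg hL.le fun _ _ => sq_nonneg _)]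
        exact integral_rpow_le_rpow_mul_integral_sq hL.le hφ.norm (fun _ => norm_nonneg _)
          hsup hp.le
    _ ≤ 2 ^ (p - 2) * ((S / √L) ^ (p - 2) + (2 * X) ^ (p - 2)) * S ^ 2 := by
        gcongr
        exact Real.add_rpow_le_two_rpow_mul_add_rpow (by positivity) (by positivity)
          (by linarith)
    _ = _ := two_rpow_mul_add_rpow_mul_sq_eq hS hC hα0.le hp.le
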